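/- (Distance of the updated DEIM space to the best approximation space.) Let U ∈ ℝ^{d×m} and Ū ∈ ℝ^{d×m} both have orthonormal columns (UᵀU = ŪᵀŪ = I_m). Let F ∈ ℝ^{d×w} satisfy F = Ū F̃ for some F̃ ∈ ℝ^{m×w} such that F̃ F̃ᵀ is positive definite with smallest eigenvalue σ² > 0 (equivalently, σ is the smallest nonzero singular value of F and the columns of F span the column space of Ū). Suppose there exists a matrix C ∈ ℝ^{m×w} with ‖F − U C‖_F² ≤ ρ². Then ‖Ū − U Uᵀ Ū‖_F² ≤ ρ² / σ². -/
import Mathlib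


open Matrix
open scoped RealInnerProductSpace

/-- The Euclidean (2-) norm of a real vector. -/
noncomputable def enorm {ι : Type*} [Fintype ι] (v : ι → ℝ) : ℝ :=
  Real.sqrt (∑ i, (v i) ^ 2)

/-- The squared Frobenius norm of a real matrix. -/
noncomputable def frobSq {ι κ : Type*} [Fintype ι] [Fintype κ] (M : Matrix ι κ ℝ) : ℝ :=
  ∑ i, ∑ j, (M i j) ^ 2

/-- The Frobenius norm of a real matrix. -/
noncomputable def frobNorm {ι κ : Type*} [Fintype ι] [Fintype κ] (M : Matrix ι κ ℝ) : ℝ :=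
  Real.sqrt (frobSq M)

/-- The spectral (operator 2-) norm of a real matrix. -/
noncomputable def specNorm {ι κ : Type*} [Fintype ι] [Fintype κ] [DecidableEq κ]
    (M : Matrix ι κ ℝ) : ℝ :=
  ‖LinearMap.toContinuousLinearMap (Matrix.toEuclideanLin M)‖

/-- Matrix-vector multiplication as a map between Euclidean spaces. -/
noncomputable def mulVecE {ι κ : Type*} [Fintype ι] [Fintype κ] [DecidableEq κ]
    (M : Matrix ι κ ℝ) (v : EuclideanSpace ℝ κ) : EuclideanSpace ℝ ι :=
  Matrix.toEuclideanLin M v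

/-- A matrix as a continuous linear map between Euclidean spaces. -/
noncomputable def toCLM {ι κ : Type*} [Fintype ι] [Fintype κ] [DecidableEq κ]
    (M : Matrix ι κ ℝ) : EuclideanSpace ℝ κ →L[ℝ] EuclideanSpace ℝ ι :=
  LinearMap.toContinuousLinearMap (Matrix.toEuclideanLin M)

/-- The canonical Poisson (symplectic) matrix `J = [[0, I], [-I, 0]]` of size `2n × 2n`. -/
noncomputable def Jmat (n : ℕ) : Matrix (Fin n ⊕ Fin n) (Fin n ⊕ Fin n) ℝ :=
  Matrix.fromBlocks 0 1 (-1) 0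

/-- A column selection matrix: its columns are distinct standard basis vectors. -/
def IsSelection {a b : ℕ} (P : Matrix (Fin a) (Fin b) ℝ) : Prop :=
  ∃ β : Fin b → Fin a, Function.Injective β ∧ ∀ i j, P i j = if i = β j then 1 else 0

section Aux

lemma frobSq_nonneg {ι κ : Type*} [Fintype ι] [Fintype κ] (M : Matrix ι κ ℝ) :
    0 ≤ frobSq M := by
  refine Finset.sum_nonneg fun i _ => Finset.sum_nonneg fun j _ => sq_nonneg _

lemma frobSq_eq_trace {ι κ : Type*} [Fintype ι] [Fintype κ] (M : Matrix ι κ ℝ) :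
    frobSq M = (Mᵀ * M).trace := by
  rw [frobSq, Matrix.trace, Finset.sum_comm]
  simp [Matrix.mul_apply, Matrix.diag, sq]

lemma proj_frobSq_le {d m k : ℕ} (U : Matrix (Fin d) (Fin m) ℝ) (hU : Uᵀ * U = 1)
    (X : Matrix (Fin d) (Fin k) ℝ) :
    frobSq ((1 - U * Uᵀ) * X) ≤ frobSq X := by
  have hPtP : (1 - U * Uᵀ)ᵀ * (1 - U * Uᵀ) = 1 - U * Uᵀ := by
    have : U * Uᵀ * (U * Uᵀ) = U * Uᵀ := by
      calc U * Uᵀ * (U * Uᵀ) = U * (Uᵀ * U) * Uᵀ := by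
            simp only [Matrix.mul_assoc]
        _ = U * Uᵀ := by rw [hU, Matrix.mul_one]
    simp only [Matrix.transpose_sub, Matrix.transpose_one, Matrix.transpose_mul,
      Matrix.transpose_transpose]
    rw [sub_mul, one_mul, mul_sub, mul_one, this, sub_self, sub_zero]
  have key : frobSq X = frobSq ((1 - U * Uᵀ) * X) + frobSq (Uᵀ * X) := by
    rw [frobSq_eq_trace, frobSq_eq_trace, frobSq_eq_trace]
    have h1 : ((1 - U * Uᵀ) * X)ᵀ * ((1 - U * Uᵀ) * X)
        = Xᵀ * ((1 - U * Uᵀ)ᵀ * (1 - U * Uᵀ)) * X := by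
      rw [Matrix.transpose_mul]; simp only [Matrix.mul_assoc]
    rw [h1, hPtP]
    have h2 : (Uᵀ * X)ᵀ * (Uᵀ * X) = Xᵀ * (U * Uᵀ) * X := by
      rw [Matrix.transpose_mul, Matrix.transpose_transpose]
      simp only [Matrix.mul_assoc]
    rw [h2, ← Matrix.trace_add]
    congr 1
    rw [Matrix.mul_sub, Matrix.mul_one, Matrix.sub_mul, sub_add_cancel]
  rw [key]
  have := frobSq_nonneg (Uᵀ * X)
  linarith

end Aux

/-- distance of the updated DEIM space to the best approximation space:
if `F = Ū F̃` with `F̃F̃ᵀ` positive definite with smallest eigenvalue `σ² > 0`, and some `C`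
satisfies `‖F − UC‖_F² ≤ ρ²`, then `‖Ū − UUᵀŪ‖_F² ≤ ρ²/σ²`. -/
theorem stmt_15 (d m w : ℕ)
    (U Ubar : Matrix (Fin d) (Fin m) ℝ)
    (hU : Uᵀ * U = 1) (hUbar : Ubarᵀ * Ubar = 1)
    (F : Matrix (Fin d) (Fin w) ℝ) (Ft : Matrix (Fin m) (Fin w) ℝ)
    (hF : F = Ubar * Ft)
    (σ : ℝ) (hσ : 0 < σ)
    (hpd : (Ft * Ftᵀ).PosDef)
    (hls : ∀ x : Fin m → ℝ, σ ^ 2 * (∑ i, (x i) ^ 2) ≤ x ⬝ᵥ ((Ft * Ftᵀ) *ᵥ x))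
    (ρ : ℝ)
    (hC : ∃ Cc : Matrix (Fin m) (Fin w) ℝ, frobSq (F - U * Cc) ≤ ρ ^ 2) :
    frobSq (Ubar - U * Uᵀ * Ubar) ≤ ρ ^ 2 / σ ^ 2 := by
  obtain ⟨C, hCle⟩ := hC
  set P : Matrix (Fin d) (Fin d) ℝ := 1 - U * Uᵀ with hP
  set G : Matrix (Fin d) (Fin m) ℝ := P * Ubar with hG
  have hGdef : Ubar - U * Uᵀ * Ubar = G := by
    rw [hG, hP, Matrix.sub_mul, Matrix.one_mul]
  have hPU : P * U = 0 := by
    rw [hP, Matrix.sub_mul, Matrix.one_mul, Matrix.mul_assoc, hU, Matrix.mul_one, sub_self]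
  have hGF : G * Ft = P * (F - U * C) := by
    rw [Matrix.mul_sub, ← Matrix.mul_assoc, hPU, Matrix.zero_mul, sub_zero, hF,
      hG, Matrix.mul_assoc]
  have step1 : σ ^ 2 * frobSq G ≤ frobSq (G * Ft) := by
    have hrow : ∀ i : Fin d,
        (fun j => G i j) ⬝ᵥ ((Ft * Ftᵀ) *ᵥ fun j => G i j)
          = ∑ l, ((G * Ft) i l) ^ 2 := by
      intro i
      simp only [dotProduct, Matrix.mulVec, Matrix.mul_apply,
        Matrix.transpose_apply, dotProduct, sq, Finset.sum_mul,
        Finset.mul_sum]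
      have e1 : (∑ j : Fin m, ∑ k : Fin m, ∑ l : Fin w,
            G i j * (Ft j l * Ft k l * G i k))
          = ∑ j : Fin m, ∑ l : Fin w, ∑ k : Fin m,
            G i j * (Ft j l * Ft k l * G i k) :=
        Finset.sum_congr rfl fun j _ => Finset.sum_comm
      rw [e1, Finset.sum_comm]
      refine Finset.sum_congr rfl fun l _ => ?_
      refine Finset.sum_congr rfl fun j _ => ?_
      refine Finset.sum_congr rfl fun k _ => ?_
      ring
    have h := fun i : Fin d => hls (fun j => G i j)
    calc σ ^ 2 * frobSq G = ∑ i, σ ^ 2 * ∑ j, (G i j) ^ 2 := by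
          rw [frobSq, Finset.mul_sum]
      _ ≤ ∑ i, (fun j => G i j) ⬝ᵥ ((Ft * Ftᵀ) *ᵥ fun j => G i j) :=
          Finset.sum_le_sum fun i _ => h i
      _ = frobSq (G * Ft) := by
          rw [frobSq]
          exact Finset.sum_congr rfl fun i _ => hrow i
  have step2 : frobSq (G * Ft) ≤ ρ ^ 2 := by
    rw [hGF]
    exact le_trans (proj_frobSq_le U hU _) hCle
  rw [hGdef, le_div_iff₀ (by positivity : (0:ℝ) < σ ^ 2), mul_comm]
  linarith
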